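/- Let α > −1 and β > −1 be real numbers and n ≥ 1 an integer. Then for all real x, (1−x²) (d²/dx²) R_n^{(α,β)}(x) + [β−α−(α+β+2)x] (d/dx) R_n^{(α,β)}(x) + n(n+α+β+1) R_n^{(α,β)}(x) = −[(α+1)_n (α+β+2)_n / ((β+1)_{n−1} n!)] P_{n−1}^{(α+2,β)}(x). -/

import Mathlib

/-- The Pochhammer symbol (rising factorial) `(a)_k = a (a+1) ⋯ (a+k-1)`. -/
noncomputable def poch (a : ℝ) (k : ℕ) : ℝ := (ascPochhammer ℝ k).eval a

/-- The Jacobi polynomial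
`P_n^{(α,β)}(x) = Σ_{k=0}^{n} [(n+α+β+1)_k / k!] [(α+k+1)_{n−k} / (n−k)!] ((x−1)/2)^k`,
valid for all real `α`, `β`. -/
noncomputable def jacobiP (α β : ℝ) (n : ℕ) (x : ℝ) : ℝ :=
  ∑ k ∈ Finset.range (n + 1),
    poch ((n : ℝ) + α + β + 1) k / Nat.factorial k *
      (poch (α + k + 1) (n - k) / Nat.factorial (n - k)) * ((x - 1) / 2) ^ k

/-- `R_n^{(α,β)}(x) = [(α+2)_{n−1} (α+β+2)_{n−1} / ((β+1)_n n!)]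
`[n(n+α+β+1) P_n^{(α,β)}(x) − (α+1)(x+1) P_n^{(α,β)}'(x)]`. -/
noncomputable def Rfun (α β : ℝ) (n : ℕ) (x : ℝ) : ℝ :=
  poch (α + 2) (n - 1) * poch (α + β + 2) (n - 1) / (poch (β + 1) n * Nat.factorial n) *
    ((n : ℝ) * ((n : ℝ) + α + β + 1) * jacobiP α β n x -
      (α + 1) * (x + 1) * deriv (jacobiP α β n) x)


lemma poch_zero (a : ℝ) : poch a 0 = 1 := by simp [poch]

lemma poch_succ_right (a : ℝ) (k : ℕ) : poch a (k+1) = poch a k * (a + k) := by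
  simp [poch, ascPochhammer_succ_right]

lemma poch_succ_left (a : ℝ) (k : ℕ) : poch a (k+1) = a * poch (a+1) k := by
  simp [poch, ascPochhammer_succ_left]

lemma poch_pos {a : ℝ} (h : 0 < a) (k : ℕ) : 0 < poch a k := by
  induction k with
  | zero => simp [poch_zero]
  | succ k ih => rw [poch_succ_right]; positivity

noncomputable def psum (f : ℕ → ℝ) (m : ℕ) (x : ℝ) : ℝ :=
  ∑ k ∈ Finset.range m, f k * ((x - 1) / 2) ^ k

noncomputable def sh (f : ℕ → ℝ) (k : ℕ) : ℝ := f (k+1) * (k+1) / 2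

noncomputable def T (f : ℕ → ℝ) : ℕ → ℝ
  | 0 => 0
  | (k+1) => f k

lemma psum_hasDerivAt (f : ℕ → ℝ) (m : ℕ) (x : ℝ) :
    HasDerivAt (fun y => psum f m y) (psum (sh f) (m-1) x) x := by
  have hterm : ∀ k : ℕ, HasDerivAt (fun y : ℝ => f k * ((y - 1) / 2) ^ k)
      (f k * ((k : ℝ) * ((x - 1) / 2) ^ (k-1) * (1/2))) x := by
    intro k
    exact ((((hasDerivAt_id x).sub_const 1).div_const 2).pow k).const_mul (f k)
  have h : HasDerivAt (fun y => psum f m y)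
      (∑ k ∈ Finset.range m, f k * ((k : ℝ) * ((x - 1) / 2) ^ (k-1) * (1/2))) x :=
    HasDerivAt.fun_sum fun k _ => hterm k
  convert h using 1
  cases m with
  | zero => simp [psum]
  | succ M =>
    rw [Finset.sum_range_succ' (fun k => f k * ((k : ℝ) * ((x - 1) / 2) ^ (k-1) * (1/2))) M]
    simp only [psum, Nat.add_sub_cancel, Nat.cast_zero, sh]
    rw [show f 0 * ((0:ℝ) * ((x-1)/2)^(0-1) * (1/2)) = 0 by ring, add_zero]
    refine Finset.sum_congr rfl fun k _ => ?_
    push_cast [Nat.add_sub_cancel]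
    ring

lemma psum_mul_t (f : ℕ → ℝ) (m : ℕ) (x : ℝ) :
    ((x - 1) / 2) * psum f m x = psum (T f) (m+1) x := by
  rw [psum, psum, Finset.mul_sum, Finset.sum_range_succ' (fun k => T f k * ((x-1)/2)^k) m]
  simp only [T, pow_succ]
  rw [show (0:ℝ) * ((x-1)/2)^0 = 0 by ring, add_zero]
  exact Finset.sum_congr rfl fun k _ => by ring

lemma psum_pad (f : ℕ → ℝ) {m M : ℕ} (h : m ≤ M) (x : ℝ) :
    psum f m x = psum (fun k => if k < m then f k else 0) M x := by
  rw [psum, psum, ← Finset.sum_subset (Finset.range_subset_range.2 h)]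
  · exact Finset.sum_congr rfl fun k hk => by
      rw [if_pos (Finset.mem_range.1 hk)]
  · intro k _ hk
    rw [if_neg (by simpa using hk), zero_mul]
noncomputable def pco (α β : ℝ) (n : ℕ) (k : ℕ) : ℝ :=
  poch ((n : ℝ) + α + β + 1) k / Nat.factorial k *
    (poch (α + k + 1) (n - k) / Nat.factorial (n - k))

lemma key_rec (α β : ℝ) {n k : ℕ} (hk : k < n) :
    ((n:ℝ) - k) * ((n:ℝ) + k + α + β + 1) * pco α β n k
      = ((k:ℝ) + 1) * (α + k + 1) * pco α β n (k+1) := by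
  obtain ⟨m, rfl⟩ : ∃ m, n = k + 1 + m := ⟨n - (k+1), by omega⟩
  have h1 : k + 1 + m - k = m + 1 := by omega
  have h2 : k + 1 + m - (k + 1) = m := by omega
  have hfk : (Nat.factorial (k+1) : ℝ) = (k+1) * Nat.factorial k := by
    push_cast [Nat.factorial_succ]; ring
  have hfm : (Nat.factorial (m+1) : ℝ) = (m+1) * Nat.factorial m := by
    push_cast [Nat.factorial_succ]; ring
  have e1 : poch (α + k + 1) (m+1) = (α + k + 1) * poch (α + k + 2) m := by
    rw [poch_succ_left]; ring_nf
  have e2 : poch ((k+1+m : ℕ) + α + β + 1) (k+1)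
      = poch ((k+1+m : ℕ) + α + β + 1) k * (((k+1+m : ℕ) : ℝ) + α + β + 1 + k) :=
    poch_succ_right _ _
  have e3 : α + ((k:ℕ)+1 : ℕ) + 1 = α + (k:ℝ) + 2 := by push_cast; ring
  simp only [pco, h1, h2, e3, e1, e2, hfk, hfm]
  have fk : (Nat.factorial k : ℝ) ≠ 0 := by positivity
  have fm : (Nat.factorial m : ℝ) ≠ 0 := by positivity
  push_cast
  field_simp
  ring
lemma poch_congr {a b : ℝ} (k : ℕ) (h : a = b) : poch a k = poch b k := by rw [h]
lemma keyB1 (α β : ℝ) {n k : ℕ} (hk : k + 1 < n) :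
    ((k:ℝ)+1) * (((k:ℝ)+β+1) * pco α β n (k+1) + ((k:ℝ)+2) * pco α β n (k+2))
      = ((n:ℝ)+α+β+1) * (β+(n:ℝ)) * pco (α+2) β (n-1) k := by
  obtain ⟨m, rfl⟩ : ∃ m, n = k + 2 + m := ⟨n - (k+2), by omega⟩
  have h0 : k + 2 + m - 1 = k + 1 + m := by omega
  have h1 : k + 2 + m - (k+1) = m + 1 := by omega
  have h2 : k + 2 + m - (k+2) = m := by omega
  have h3 : k + 1 + m - k = m + 1 := by omega
  simp only [pco, h0, h1, h2, h3]
  -- canonicalize poch bases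
  have c1 : poch ((k+2+m : ℕ) + α + β + 1) (k+1)
      = ((k:ℝ)+2+m+α+β+1) * poch ((k:ℝ)+2+m+α+β+2) k := by
    rw [poch_succ_left]
    push_cast
    rw [poch_congr k (by ring : ((k:ℝ)+2+↑m+α+β+1+1) = (k:ℝ)+2+m+α+β+2)]
  have c2 : poch ((k+2+m : ℕ) + α + β + 1) (k+2)
      = ((k:ℝ)+2+m+α+β+1) * (poch ((k:ℝ)+2+m+α+β+2) k * ((k:ℝ)+2+m+α+β+2+k)) := by
    rw [poch_succ_left, poch_succ_right]
    push_cast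
    rw [poch_congr k (by ring : ((k:ℝ)+2+↑m+α+β+1+1) = (k:ℝ)+2+m+α+β+2)]
    ring
  have c3 : poch ((k+1+m : ℕ) + (α+2) + β + 1) k = poch ((k:ℝ)+2+m+α+β+2) k := by
    apply poch_congr; push_cast; ring
  have c4 : poch (α + ((k:ℕ)+1 : ℕ) + 1) (m+1) = (α+(k:ℝ)+2) * poch (α+(k:ℝ)+3) m := by
    rw [poch_succ_left]
    push_cast
    rw [poch_congr m (by ring : (α+((k:ℝ)+1)+1+1) = α+(k:ℝ)+3)]
    ring
  have c5 : poch (α + ((k:ℕ)+2 : ℕ) + 1) m = poch (α+(k:ℝ)+3) m := by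
    apply poch_congr; push_cast; ring
  have c6 : poch ((α+2) + (k:ℕ) + 1) (m+1) = poch (α+(k:ℝ)+3) m * (α+(k:ℝ)+3+m) := by
    rw [poch_succ_right]
    push_cast
    rw [poch_congr m (by ring : (α+2+(k:ℝ)+1) = α+(k:ℝ)+3)]
    ring
  have hfk1 : (Nat.factorial (k+1) : ℝ) = (k+1) * Nat.factorial k := by
    push_cast [Nat.factorial_succ]; ring
  have hfk2 : (Nat.factorial (k+2) : ℝ) = (k+2) * ((k+1) * Nat.factorial k) := by
    push_cast [Nat.factorial_succ]; ring
  have hfm : (Nat.factorial (m+1) : ℝ) = (m+1) * Nat.factorial m := by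
    push_cast [Nat.factorial_succ]; ring
  rw [c1, c2, c3, c4, c5, c6, hfk1, hfk2, hfm]
  have fk : (Nat.factorial k : ℝ) ≠ 0 := by positivity
  have fm : (Nat.factorial m : ℝ) ≠ 0 := by positivity
  field_simp
  push_cast
  ring

lemma keyB2 (α β : ℝ) {n k : ℕ} (hk : k + 1 = n) :
    ((k:ℝ)+1) * (((k:ℝ)+β+1) * pco α β n (k+1))
      = ((n:ℝ)+α+β+1) * (β+(n:ℝ)) * pco (α+2) β (n-1) k := by
  subst hk
  have h1 : k + 1 - (k+1) = 0 := by omega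
  have h2 : k + 1 - 1 = k := by omega
  have h3 : k - k = 0 := by omega
  simp only [pco, h1, h2, h3, poch_zero, Nat.factorial_zero]
  have c1 : poch ((k+1 : ℕ) + α + β + 1) (k+1)
      = ((k:ℝ)+1+α+β+1) * poch ((k:ℝ)+1+α+β+2) k := by
    rw [poch_succ_left]
    push_cast
    rw [poch_congr k (by ring : ((k:ℝ)+1+α+β+1+1) = (k:ℝ)+1+α+β+2)]
  have c2 : poch ((k : ℕ) + (α+2) + β + 1) k = poch ((k:ℝ)+1+α+β+2) k := by
    apply poch_congr; push_cast; ring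
  rw [c1, c2]
  have hfk1 : (Nat.factorial (k+1) : ℝ) = (k+1) * Nat.factorial k := by
    push_cast [Nat.factorial_succ]; ring
  rw [hfk1]
  have fk : (Nat.factorial k : ℝ) ≠ 0 := by positivity
  field_simp
  push_cast
  ring

lemma psum_combine5 (c1 c2 c3 c4 c5 : ℝ) (f1 f2 f3 f4 f5 : ℕ → ℝ) (m : ℕ) (x : ℝ) :
    c1 * psum f1 m x + c2 * psum f2 m x + c3 * psum f3 m x + c4 * psum f4 m x
      + c5 * psum f5 m x
    = psum (fun k => c1 * f1 k + c2 * f2 k + c3 * f3 k + c4 * f4 k + c5 * f5 k) m x := by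
  simp only [psum, Finset.mul_sum, ← Finset.sum_add_distrib]
  exact Finset.sum_congr rfl fun k _ => by ring

lemma coeffI (α β : ℝ) {n : ℕ} (hn : 1 ≤ n) {k : ℕ} (hk : k < n + 1) :
    (-4) * T (T (sh (sh (pco α β n)))) k
      + (-4) * (if k < n then T (sh (sh (pco α β n))) k else 0)
      + (-2*(α+1)) * (if k < n then sh (pco α β n) k else 0)
      + (-2*(α+β+2)) * T (sh (pco α β n)) k
      + ((n:ℝ) * ((n:ℝ) + α + β + 1)) * pco α β n k = 0 := by
  match k, hk with
  | 0, _ =>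
    simp only [T, sh, if_pos (show 0 < n from hn)]
    have h := key_rec α β (show 0 < n from hn)
    push_cast at h ⊢
    linear_combination h
  | 1, hk =>
    rcases Nat.lt_or_ge 1 n with h1 | h1
    · simp only [T, sh, if_pos h1]
      have h := key_rec α β h1
      push_cast at h ⊢
      linear_combination h
    · have hn1 : n = 1 := by omega
      subst hn1
      simp only [T, sh, if_neg (lt_irrefl 1)]
      push_cast
      ring
  | (j+2), hk =>
    rcases Nat.lt_or_ge (j+2) n with h1 | h1
    · simp only [T, sh, if_pos h1, if_pos (show j+1 < n - 1 + 1 by omega)]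
      have h := key_rec α β h1
      push_cast at h ⊢
      linear_combination h
    · have hn2 : n = j + 2 := by omega
      subst hn2
      simp only [T, sh, if_neg (lt_irrefl (j+2))]
      push_cast
      ring

lemma ode_sum (α β : ℝ) {n : ℕ} (hn : 1 ≤ n) (x : ℝ) :
    (1 - x^2) * psum (sh (sh (pco α β n))) (n-1) x
      + (β - α - (α+β+2)*x) * psum (sh (pco α β n)) n x
      + ((n:ℝ) * ((n:ℝ) + α + β + 1)) * psum (pco α β n) (n+1) x = 0 := by
  set a := pco α β n with ha
  have h1 : ((x-1)/2) * psum (sh (sh a)) (n-1) x = psum (T (sh (sh a))) n x := by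
    have := psum_mul_t (sh (sh a)) (n-1) x
    rwa [Nat.sub_add_cancel hn] at this
  have h2 : ((x-1)/2) * psum (T (sh (sh a))) n x = psum (T (T (sh (sh a)))) (n+1) x :=
    psum_mul_t _ _ _
  have h3 : ((x-1)/2) * psum (sh a) n x = psum (T (sh a)) (n+1) x := psum_mul_t _ _ _
  have key : ∀ k < n + 1,
      (-4) * T (T (sh (sh a))) k + (-4) * (if k < n then T (sh (sh a)) k else 0)
        + (-2*(α+1)) * (if k < n then sh a k else 0) + (-2*(α+β+2)) * T (sh a) k
        + ((n:ℝ) * ((n:ℝ) + α + β + 1)) * a k = 0 := fun k hk => coeffI α β hn hk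
  calc (1 - x^2) * psum (sh (sh a)) (n-1) x
      + (β - α - (α+β+2)*x) * psum (sh a) n x
      + ((n:ℝ) * ((n:ℝ) + α + β + 1)) * psum a (n+1) x
      = (-4) * (((x-1)/2) * (((x-1)/2) * psum (sh (sh a)) (n-1) x))
        + (-4) * (((x-1)/2) * psum (sh (sh a)) (n-1) x)
        + (-2*(α+1)) * psum (sh a) n x
        + (-2*(α+β+2)) * (((x-1)/2) * psum (sh a) n x)
        + ((n:ℝ) * ((n:ℝ) + α + β + 1)) * psum a (n+1) x := by ring
    _ = (-4) * psum (T (T (sh (sh a)))) (n+1) x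
        + (-4) * psum (fun k => if k < n then T (sh (sh a)) k else 0) (n+1) x
        + (-2*(α+1)) * psum (fun k => if k < n then sh a k else 0) (n+1) x
        + (-2*(α+β+2)) * psum (T (sh a)) (n+1) x
        + ((n:ℝ) * ((n:ℝ) + α + β + 1)) * psum a (n+1) x := by
          rw [h1, h2, h3, ← psum_pad _ (Nat.le_succ n) x, ← psum_pad _ (Nat.le_succ n) x]
    _ = psum (fun k => (-4) * T (T (sh (sh a))) k
          + (-4) * (if k < n then T (sh (sh a)) k else 0)
          + (-2*(α+1)) * (if k < n then sh a k else 0)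
          + (-2*(α+β+2)) * T (sh a) k
          + ((n:ℝ) * ((n:ℝ) + α + β + 1)) * a k) (n+1) x := psum_combine5 _ _ _ _ _ _ _ _ _ _ _ _
    _ = 0 := by
        rw [psum]
        apply Finset.sum_eq_zero
        intro k hk
        rw [key k (Finset.mem_range.1 hk), zero_mul]

lemma psum_combine3 (c1 c2 c3 : ℝ) (f1 f2 f3 : ℕ → ℝ) (m : ℕ) (x : ℝ) :
    c1 * psum f1 m x + c2 * psum f2 m x + c3 * psum f3 m x
    = psum (fun k => c1 * f1 k + c2 * f2 k + c3 * f3 k) m x := by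
  simp only [psum, Finset.mul_sum, ← Finset.sum_add_distrib]
  exact Finset.sum_congr rfl fun k _ => by ring

lemma coeffB (α β : ℝ) {n : ℕ} (hn : 1 ≤ n) {k : ℕ} (hk : k < n) :
    4 * T (sh (sh (pco α β n))) k
      + 4 * (if k < n - 1 then sh (sh (pco α β n)) k else 0)
      + 2*(β+1) * sh (pco α β n) k
    = ((n:ℝ)+α+β+1) * (β+(n:ℝ)) * pco (α+2) β (n-1) k := by
  rcases Nat.lt_or_ge k (n-1) with h1 | h1
  · -- k + 1 < n
    have hk1 : k + 1 < n := by omega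
    have h := keyB1 α β hk1
    match k with
    | 0 =>
      simp only [T, sh, if_pos h1]
      push_cast at h ⊢
      linear_combination h
    | (j+1) =>
      simp only [T, sh, if_pos h1]
      push_cast at h ⊢
      linear_combination h
  · -- k = n - 1
    have hk1 : k + 1 = n := by omega
    have h := keyB2 α β hk1
    have hnk : ¬ (k < n - 1) := by omega
    match k with
    | 0 =>
      simp only [T, sh, if_neg hnk]
      push_cast at h ⊢
      linear_combination h
    | (j+1) =>
      simp only [T, sh, if_neg hnk]
      push_cast at h ⊢
      linear_combination h

lemma identB_sum (α β : ℝ) {n : ℕ} (hn : 1 ≤ n) (x : ℝ) :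
    ((n:ℝ)+α+β+1) * (β+(n:ℝ)) * psum (pco (α+2) β (n-1)) n x
    = 2*((x+1) * psum (sh (sh (pco α β n))) (n-1) x)
      + 2*(β+1) * psum (sh (pco α β n)) n x := by
  set a := pco α β n with ha
  have h1 : ((x-1)/2) * psum (sh (sh a)) (n-1) x = psum (T (sh (sh a))) n x := by
    have := psum_mul_t (sh (sh a)) (n-1) x
    rwa [Nat.sub_add_cancel hn] at this
  have key : ∀ k < n,
      4 * T (sh (sh a)) k + 4 * (if k < n - 1 then sh (sh a) k else 0)
        + 2*(β+1) * sh a k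
      = ((n:ℝ)+α+β+1) * (β+(n:ℝ)) * pco (α+2) β (n-1) k := fun k hk => coeffB α β hn hk
  calc ((n:ℝ)+α+β+1) * (β+(n:ℝ)) * psum (pco (α+2) β (n-1)) n x
      = psum (fun k => ((n:ℝ)+α+β+1) * (β+(n:ℝ)) * pco (α+2) β (n-1) k) n x := by
        simp only [psum, Finset.mul_sum]
        exact Finset.sum_congr rfl fun k _ => by ring
    _ = psum (fun k => 4 * T (sh (sh a)) k + 4 * (if k < n - 1 then sh (sh a) k else 0)
          + 2*(β+1) * sh a k) n x := by
        rw [psum, psum]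
        exact Finset.sum_congr rfl fun k hk => by
          rw [key k (Finset.mem_range.1 hk)]
    _ = 4 * psum (T (sh (sh a))) n x
        + 4 * psum (fun k => if k < n - 1 then sh (sh a) k else 0) n x
        + 2*(β+1) * psum (sh a) n x := (psum_combine3 _ _ _ _ _ _ _ _).symm
    _ = 2*((x+1) * psum (sh (sh a)) (n-1) x) + 2*(β+1) * psum (sh a) n x := by
        rw [← h1, ← psum_pad _ (Nat.sub_le n 1) x]
        ring

lemma const_rel (α β : ℝ) (hα : -1 < α) (hβ : -1 < β) {n : ℕ} (hn : 1 ≤ n) :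
    poch (α+1) n * poch (α+β+2) n / (poch (β+1) (n-1) * (Nat.factorial n : ℝ))
    = poch (α+2) (n-1) * poch (α+β+2) (n-1) / (poch (β+1) n * (Nat.factorial n : ℝ))
      * ((α+1) * ((n:ℝ)+α+β+1) * (β+(n:ℝ))) := by
  obtain ⟨m, rfl⟩ : ∃ m, n = m + 1 := ⟨n-1, by omega⟩
  simp only [Nat.add_sub_cancel]
  rw [poch_succ_left (α+1) m, poch_succ_right (α+β+2) m, poch_succ_right (β+1) m]
  have h1 : (0:ℝ) < poch (β+1) m := poch_pos (by linarith) m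
  have h2 : (0:ℝ) < (Nat.factorial (m+1) : ℝ) := by positivity
  have h3 : (0:ℝ) < β+1+(m:ℝ) := by have : (0:ℝ) ≤ m := Nat.cast_nonneg m; linarith
  have e1 : α + 1 + 1 = α + 2 := by ring
  rw [e1]
  push_cast
  field_simp
  ring

/-- the Jacobi differential operator applied to `R_n^{(α,β)}` gives
`−[(α+1)_n (α+β+2)_n / ((β+1)_{n−1} n!)] P_{n−1}^{(α+2,β)}(x)`. -/
theorem jacobi_operator_Rfun (α β : ℝ) (hα : -1 < α) (hβ : -1 < β)
    (n : ℕ) (hn : 1 ≤ n) (x : ℝ) :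
    (1 - x ^ 2) * iteratedDeriv 2 (Rfun α β n) x +
      (β - α - (α + β + 2) * x) * deriv (Rfun α β n) x +
      (n : ℝ) * ((n : ℝ) + α + β + 1) * Rfun α β n x
    = -(poch (α + 1) n * poch (α + β + 2) n / (poch (β + 1) (n - 1) * Nat.factorial n)) *
        jacobiP (α + 2) β (n - 1) x := by
  set c : ℝ := poch (α + 2) (n - 1) * poch (α + β + 2) (n - 1) /
      (poch (β + 1) n * Nat.factorial n) with hc
  -- basic derivatives of the psum pieces
  have hA : ∀ y : ℝ, HasDerivAt (fun y => psum (pco α β n) (n+1) y)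
      (psum (sh (pco α β n)) n y) y := by
    intro y
    have h := psum_hasDerivAt (pco α β n) (n+1) y
    rwa [Nat.add_sub_cancel] at h
  have hB : ∀ y : ℝ, HasDerivAt (fun y => psum (sh (pco α β n)) n y)
      (psum (sh (sh (pco α β n))) (n-1) y) y := fun y => psum_hasDerivAt _ _ _
  have hC : ∀ y : ℝ, HasDerivAt (fun y => psum (sh (sh (pco α β n))) (n-1) y)
      (psum (sh (sh (sh (pco α β n)))) (n-1-1) y) y := fun y => psum_hasDerivAt _ _ _
  have hJfun : jacobiP α β n = fun y => psum (pco α β n) (n+1) y := rfl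
  have hderivJ : deriv (jacobiP α β n) = fun y => psum (sh (pco α β n)) n y := by
    rw [hJfun]; exact funext fun y => (hA y).deriv
  have hRfun : Rfun α β n = fun y => c * ((n : ℝ) * ((n : ℝ) + α + β + 1) *
      psum (pco α β n) (n+1) y - (α+1) * (y+1) * psum (sh (pco α β n)) n y) := by
    funext y
    rw [Rfun, hderivJ, hJfun]
  -- first derivative of Rfun
  have hw : ∀ y : ℝ, HasDerivAt (fun y : ℝ => (α+1) * (y+1)) (α+1) y := by
    intro y
    have h := ((hasDerivAt_id y).add_const 1).const_mul (α+1)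
    rwa [show (α+1) * 1 = α+1 by ring] at h
  have hd1 : ∀ y : ℝ, HasDerivAt (Rfun α β n)
      (c * ((n : ℝ) * ((n : ℝ) + α + β + 1) * psum (sh (pco α β n)) n y
        - ((α+1) * psum (sh (pco α β n)) n y
          + (α+1) * (y+1) * psum (sh (sh (pco α β n))) (n-1) y))) y := by
    intro y
    rw [hRfun]
    have h := (((hA y).const_mul ((n : ℝ) * ((n : ℝ) + α + β + 1))).sub
      ((hw y).mul (hB y))).const_mul c
    exact h
  have hderivR : deriv (Rfun α β n) = fun y =>
      c * ((n : ℝ) * ((n : ℝ) + α + β + 1) * psum (sh (pco α β n)) n y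
        - ((α+1) * psum (sh (pco α β n)) n y
          + (α+1) * (y+1) * psum (sh (sh (pco α β n))) (n-1) y)) :=
    funext fun y => (hd1 y).deriv
  -- second derivative
  have hd2 : ∀ y : ℝ, HasDerivAt (fun y =>
      c * ((n : ℝ) * ((n : ℝ) + α + β + 1) * psum (sh (pco α β n)) n y
        - ((α+1) * psum (sh (pco α β n)) n y
          + (α+1) * (y+1) * psum (sh (sh (pco α β n))) (n-1) y)))
      (c * ((n : ℝ) * ((n : ℝ) + α + β + 1) * psum (sh (sh (pco α β n))) (n-1) y
        - ((α+1) * psum (sh (sh (pco α β n))) (n-1) y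
          + ((α+1) * psum (sh (sh (pco α β n))) (n-1) y
            + (α+1) * (y+1) * psum (sh (sh (sh (pco α β n)))) (n-1-1) y)))) y := by
    intro y
    exact (((hB y).const_mul ((n : ℝ) * ((n : ℝ) + α + β + 1))).sub
      (((hB y).const_mul (α+1)).add ((hw y).mul (hC y)))).const_mul c
  have hit : iteratedDeriv 2 (Rfun α β n) x
      = c * ((n : ℝ) * ((n : ℝ) + α + β + 1) * psum (sh (sh (pco α β n))) (n-1) x
        - ((α+1) * psum (sh (sh (pco α β n))) (n-1) x
          + ((α+1) * psum (sh (sh (pco α β n))) (n-1) x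
            + (α+1) * (x+1) * psum (sh (sh (sh (pco α β n)))) (n-1-1) x))) := by
    rw [show (2:ℕ) = 1 + 1 from rfl, iteratedDeriv_succ, iteratedDeriv_one, hderivR]
    exact (hd2 x).deriv
  -- the ODE and its derivative
  have hI : ∀ y : ℝ, (1 - y^2) * psum (sh (sh (pco α β n))) (n-1) y
      + (β - α - (α+β+2)*y) * psum (sh (pco α β n)) n y
      + ((n:ℝ) * ((n:ℝ) + α + β + 1)) * psum (pco α β n) (n+1) y = 0 :=
    fun y => ode_sum α β hn y
  have hFd : ∀ y : ℝ, HasDerivAt (fun y => (1 - y^2) * psum (sh (sh (pco α β n))) (n-1) y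
      + (β - α - (α+β+2)*y) * psum (sh (pco α β n)) n y
      + ((n:ℝ) * ((n:ℝ) + α + β + 1)) * psum (pco α β n) (n+1) y)
      ((-(2*y)) * psum (sh (sh (pco α β n))) (n-1) y
        + (1 - y^2) * psum (sh (sh (sh (pco α β n)))) (n-1-1) y
        + ((-(α+β+2)) * psum (sh (pco α β n)) n y
          + (β - α - (α+β+2)*y) * psum (sh (sh (pco α β n))) (n-1) y)
        + ((n:ℝ) * ((n:ℝ) + α + β + 1)) * psum (sh (pco α β n)) n y) y := by
    intro y
    have h1 : HasDerivAt (fun y : ℝ => 1 - y^2) (-(2*y)) y := by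
      have h := (hasDerivAt_pow 2 y).const_sub 1
      rwa [show -((2:ℕ) * y^(2-1)) = -(2*y) by push_cast; ring] at h
    have h2 : HasDerivAt (fun y : ℝ => β - α - (α+β+2)*y) (-(α+β+2)) y := by
      have h := ((hasDerivAt_id y).const_mul (α+β+2)).const_sub (β - α)
      rwa [show -((α+β+2) * 1) = -(α+β+2) by ring] at h
    exact ((h1.mul (hC y)).add (h2.mul (hB y))).add ((hA y).const_mul _)
  have hG : ∀ y : ℝ, (-(2*y)) * psum (sh (sh (pco α β n))) (n-1) y
        + (1 - y^2) * psum (sh (sh (sh (pco α β n)))) (n-1-1) y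
        + ((-(α+β+2)) * psum (sh (pco α β n)) n y
          + (β - α - (α+β+2)*y) * psum (sh (sh (pco α β n))) (n-1) y)
        + ((n:ℝ) * ((n:ℝ) + α + β + 1)) * psum (sh (pco α β n)) n y = 0 := by
    intro y
    have hF0 : (fun y => (1 - y^2) * psum (sh (sh (pco α β n))) (n-1) y
      + (β - α - (α+β+2)*y) * psum (sh (pco α β n)) n y
      + ((n:ℝ) * ((n:ℝ) + α + β + 1)) * psum (pco α β n) (n+1) y) = fun _ : ℝ => (0:ℝ) :=
      funext fun y => hI y
    calc _ = deriv (fun y => (1 - y^2) * psum (sh (sh (pco α β n))) (n-1) y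
      + (β - α - (α+β+2)*y) * psum (sh (pco α β n)) n y
      + ((n:ℝ) * ((n:ℝ) + α + β + 1)) * psum (pco α β n) (n+1) y) y := ((hFd y).deriv).symm
    _ = 0 := by rw [hF0]; exact deriv_const y 0
  -- RHS rewriting
  have hRHS : jacobiP (α+2) β (n-1) x = psum (pco (α+2) β (n-1)) n x := by
    have h : jacobiP (α+2) β (n-1) x = psum (pco (α+2) β (n-1)) ((n-1)+1) x := rfl
    rwa [Nat.sub_add_cancel hn] at h
  have hB2 := identB_sum α β hn x
  have hCc := const_rel α β hα hβ hn
  rw [← hc] at hCc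
  have hRx : Rfun α β n x = c * ((n : ℝ) * ((n : ℝ) + α + β + 1) *
      psum (pco α β n) (n+1) x - (α+1) * (x+1) * psum (sh (pco α β n)) n x) := by
    rw [hRfun]
  rw [hit, (hd1 x).deriv, hRx, hRHS]
  linear_combination (c * ((n:ℝ) * ((n:ℝ) + α + β + 1))) * hI x
    + (-(c*(α+1)*(x+1))) * hG x + (c*(α+1)) * hB2
    + (psum (pco (α+2) β (n-1)) n x) * hCc
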